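/- Let K be a commutative ring with char(K) = 2, and let G be the central product of σ-groups H₁, ..., H_n (n ≥ 2), H_i = ⟨a_i, b_i⟩, with common central commutator c of order 2, together with a central Abelian subgroup, where σ(a_i) = a_i c and σ(b_i) = b_i c for all i, and f is trivial. Then KG is σ-normal: xx^σ = x^σx for all x ∈ KG, where x^σ = Σ α_g σ(g). -/

import Mathlib

noncomputable def sigmaMap {K G : Type*} [CommRing K] [Group G] (σ : G → G) (f : G →* Kˣ)
    (x : MonoidAlgebra K G) : MonoidAlgebra K G :=
  Finsupp.sum x.coeff fun g a => MonoidAlgebra.single (σ g) (a * (f g : K))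

/-! Modulo `Z = ⟨c⟩ = {1, c}` the generators commute, so `G ⧸ Z` is abelian and every
commutator lies in `{1, c}`. As `G ⧸ Z` is abelian, the anti-homomorphism `σ` becomes a
homomorphism modulo `Z` which agrees with the identity on the generators; hence `σ g ∈ {g, g c}`
for every `g`. Splitting `x = x₀ + x₁` according to these two cases gives `x^σ = x₀ + x₁ c`, and
then `x x^σ - x^σ x = [x₀, x₁] (c - 1)`. In characteristic `2` we have `c - 1 = c + 1`, which
annihilates every `g h - h g = g h (1 - c^ε)` because `(1 - c) (1 + c) = 1 - c² = 0`. -/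

open MonoidAlgebra

section Group

variable {G : Type*} [Group G]

theorem Subgroup.normal_of_le_center {N : Subgroup G} (h : N ≤ Subgroup.center G) : N.Normal :=
  ⟨fun n hn g => by simpa [Subgroup.mem_center_iff.mp (h hn) g] using hn⟩

theorem commute_of_closure_eq_top {S : Set G} (hS : Subgroup.closure S = ⊤)
    (h : ∀ s ∈ S, ∀ t ∈ S, Commute s t) (x y : G) : Commute x y := by
  have hS' : Subgroup.closure S ≤ Subgroup.centralizer S :=
    (Subgroup.closure_le _).mpr fun t ht => Subgroup.mem_centralizer_iff.mpr fun s hs => h s hs t ht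
  have hx := Subgroup.closure_le_centralizer_centralizer S (hS ▸ Subgroup.mem_top x)
  exact (Subgroup.mem_centralizer_iff.mp hx y (hS' (hS ▸ Subgroup.mem_top y))).symm

theorem commute_of_surjective_of_closure_eq_top {H : Type*} [Group H] {f : G →* H}
    (hf : Function.Surjective f) {S : Set G} (hS : Subgroup.closure S = ⊤)
    (h : ∀ s ∈ S, ∀ t ∈ S, Commute (f s) (f t)) (x y : H) : Commute x y := by
  refine commute_of_closure_eq_top (S := f '' S) ?_ ?_ x y
  · rw [← MonoidHom.map_closure, hS, ← MonoidHom.range_eq_map, MonoidHom.range_eq_top.mpr hf]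
  · rintro _ ⟨s, hs, rfl⟩ _ ⟨t, ht, rfl⟩
    exact h s hs t ht

theorem map_antiMul_eq_of_eqOn_dense {H : Type*} [Group H] (hH : ∀ x y : H, Commute x y)
    (f : G →* H) {σ : G → G} (hanti : ∀ x y, σ (x * y) = σ y * σ x) {S : Set G}
    (hS : Subgroup.closure S = ⊤) (h : ∀ s ∈ S, f (σ s) = f s) (g : G) : f (σ g) = f g := by
  have hσ1 : σ 1 = 1 := by simpa using hanti 1 1
  let fσ : G →* H :=
    { toFun := fun x => f (σ x)
      map_one' := by rw [hσ1, map_one]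
      map_mul' := fun x y => by rw [hanti, map_mul]; exact hH _ _ }
  exact DFunLike.congr_fun (MonoidHom.eq_of_eqOn_dense hS (f := fσ) (g := f) h) g

theorem eq_or_eq_mul_of_mk_eq {c x y : G} (hc : c ^ 2 = 1)
    (h : (x : G ⧸ Subgroup.zpowers c) = y) : y = x ∨ y = x * c := by
  obtain ⟨k, hk⟩ := Subgroup.mem_zpowers_iff.mp (QuotientGroup.eq.mp h)
  rw [zpow_eq_zpow_emod k (n := 2) (by exact_mod_cast hc)] at hk
  rcases Int.emod_two_eq_zero_or_one k with h0 | h1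
  · rw [h0, zpow_zero, eq_comm, inv_mul_eq_one] at hk
    exact .inl hk.symm
  · rw [h1, zpow_one, eq_comm, inv_mul_eq_iff_eq_mul] at hk
    exact .inr hk

theorem commute_mk_of_mem_generators {n : ℕ} {a b : Fin n → G} {c : G} {C : Subgroup G}
    [(Subgroup.zpowers c).Normal]
    (hcomm : ∀ i, (a i)⁻¹ * (b i)⁻¹ * a i * b i = c)
    (hfac : ∀ i j, i ≠ j →
      Commute (a i) (a j) ∧ Commute (a i) (b j) ∧ Commute (b i) (b j))
    (hC : C ≤ Subgroup.center G) :
    ∀ s ∈ Set.range a ∪ Set.range b ∪ C, ∀ t ∈ Set.range a ∪ Set.range b ∪ C,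
      Commute (QuotientGroup.mk' (Subgroup.zpowers c) s)
        (QuotientGroup.mk' (Subgroup.zpowers c) t) := by
  set π := QuotientGroup.mk' (Subgroup.zpowers c)
  have hπc : π c = 1 := (QuotientGroup.eq_one_iff c).mpr (Subgroup.mem_zpowers c)
  have hab : ∀ i j, Commute (π (a i)) (π (b j)) := by
    intro i j
    rcases eq_or_ne i j with rfl | hij
    · have : a i * b i = b i * a i * c := by rw [← hcomm i]; group
      rw [Commute, SemiconjBy, ← map_mul, ← map_mul, this, map_mul π _ c, hπc, mul_one]
    · exact (hfac i j hij).2.1.map π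
  have haa : ∀ i j, Commute (π (a i)) (π (a j)) := by
    intro i j
    rcases eq_or_ne i j with rfl | hij
    · exact .refl _
    · exact (hfac i j hij).1.map π
  have hbb : ∀ i j, Commute (π (b i)) (π (b j)) := by
    intro i j
    rcases eq_or_ne i j with rfl | hij
    · exact .refl _
    · exact (hfac i j hij).2.2.map π
  have hcentral : ∀ d ∈ C, ∀ g, Commute (π d) (π g) := fun d hd g =>
    (show Commute d g from (Subgroup.mem_center_iff.mp (hC hd) g).symm).map π
  rintro s ((⟨i, rfl⟩ | ⟨i, rfl⟩) | hs) t ((⟨j, rfl⟩ | ⟨j, rfl⟩) | ht)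
  all_goals first
    | exact haa i j | exact hab i j | exact (hab j i).symm | exact hbb i j
    | exact (hcentral t ht _).symm | exact hcentral s hs _

end Group

theorem sub_mul_eq_commutator_mul_sub_one {A : Type*} [Ring A] {e : A} (he : ∀ y, Commute e y)
    (x₀ x₁ : A) :
    (x₀ + x₁) * (x₀ + x₁ * e) - (x₀ + x₁ * e) * (x₀ + x₁) = (x₀ * x₁ - x₁ * x₀) * (e - 1) := by
  have h₀ : x₁ * e * x₀ = x₁ * x₀ * e := by rw [mul_assoc, (he x₀).eq, mul_assoc]
  have h₁ : x₁ * e * x₁ = x₁ * x₁ * e := by rw [mul_assoc, (he x₁).eq, mul_assoc]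
  calc _ = x₀ * x₁ * e + x₁ * x₀ - x₀ * x₁ - x₁ * e * x₀ + (x₁ * x₁ * e - x₁ * e * x₁) := by
        noncomm_ring
    _ = _ := by rw [h₀, h₁]; noncomm_ring

section GroupRing

variable {K G : Type*} [CommRing K] [Group G]

theorem sigmaMap_zero (σ : G → G) (f : G →* Kˣ) : sigmaMap σ f 0 = 0 := by
  simp [sigmaMap]

theorem sigmaMap_add (σ : G → G) (f : G →* Kˣ) (x y : K[G]) :
    sigmaMap σ f (x + y) = sigmaMap σ f x + sigmaMap σ f y := by
  unfold sigmaMap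
  rw [coeff_add, Finsupp.sum_add_index'] <;> simp [add_mul, single_add]

theorem sigmaMap_single (σ : G → G) (f : G →* Kˣ) (g : G) (r : K) :
    sigmaMap σ f (single g r) = single (σ g) (r * f g) := by
  simp [sigmaMap]

theorem exists_sigmaMap_one_eq {σ : G → G} {c : G} (hσ : ∀ g, σ g = g ∨ σ g = g * c) (x : K[G]) :
    ∃ x₀ x₁, x = x₀ + x₁ ∧ sigmaMap σ 1 x = x₀ + x₁ * of K G c := by
  induction x using MonoidAlgebra.induction_linear with
  | zero => exact ⟨0, 0, by simp, by simp [sigmaMap_zero]⟩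
  | add x y hx hy =>
    obtain ⟨x₀, x₁, rfl, hx⟩ := hx
    obtain ⟨y₀, y₁, rfl, hy⟩ := hy
    refine ⟨x₀ + y₀, x₁ + y₁, by abel, ?_⟩
    rw [sigmaMap_add, hx, hy, add_mul]
    abel
  | single g r =>
    rcases hσ g with h | h
    · exact ⟨single g r, 0, by simp, by simp [sigmaMap_single, h]⟩
    · exact ⟨0, single g r, by simp, by simp [sigmaMap_single, h, of_apply, single_mul_single]⟩

theorem commutator_mul_of_add_one_eq_zero {c : G} (hc : c ^ 2 = 1)
    (hcomm : ∀ g h, h * g = g * h ∨ h * g = g * h * c) (y z : K[G]) :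
    (y * z - z * y) * (of K G c + 1) = 0 := by
  induction y using MonoidAlgebra.induction_linear with
  | zero => simp
  | add y₁ y₂ h₁ h₂ => rw [add_mul y₁, mul_add z, add_sub_add_comm, add_mul, h₁, h₂, add_zero]
  | single g r =>
  induction z using MonoidAlgebra.induction_linear with
  | zero => simp
  | add z₁ z₂ h₁ h₂ =>
    rw [mul_add (single g r), add_mul z₁, add_sub_add_comm, add_mul, h₁, h₂, add_zero]
  | single h s =>
    have hc' : (1 - of K G c) * (of K G c + 1) = 0 := by
      rw [sub_mul, one_mul, mul_add, ← map_mul, ← pow_two, hc, map_one, mul_one, add_comm, sub_self]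
    rcases hcomm g h with hgh | hgh
    · simp [single_mul_single, hgh, mul_comm r s]
    · have hswap : single h s * single g r = single g r * single h s * of K G c := by
        simp [single_mul_single, hgh, of_apply, mul_comm r s]
      rw [hswap, ← mul_one_sub, mul_assoc, hc', mul_zero]

theorem mul_sigmaMap_one_comm [CharP K 2] {σ : G → G} {c : G} (hcz : c ∈ Subgroup.center G)
    (hc : c ^ 2 = 1) (hcomm : ∀ g h, h * g = g * h ∨ h * g = g * h * c)
    (hσ : ∀ g, σ g = g ∨ σ g = g * c) (x : K[G]) :
    x * sigmaMap σ 1 x = sigmaMap σ 1 x * x := by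
  have : CharP K[G] 2 := charP_of_injective_algebraMap' K 2
  obtain ⟨x₀, x₁, rfl, hx⟩ := exists_sigmaMap_one_eq hσ x
  have hcentral : ∀ y, Commute (of K G c) y :=
    of_commute fun g => (Subgroup.mem_center_iff.mp hcz g).symm
  rw [hx, ← sub_eq_zero, sub_mul_eq_commutator_mul_sub_one hcentral, CharTwo.sub_eq_add (of K G c),
    commutator_mul_of_add_one_eq_zero hc hcomm]

end GroupRing

theorem stmt_19_general {K G : Type*} [CommRing K] [Group G] (hchar : ringChar K = 2)
    (n : ℕ) (a b : Fin n → G) (c : G)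
    (hc2 : c ^ 2 = 1) (hcz : c ∈ Subgroup.center G)
    (hcomm : ∀ i, (a i)⁻¹ * (b i)⁻¹ * a i * b i = c)
    (hfac : ∀ i j, i ≠ j →
      Commute (a i) (a j) ∧ Commute (a i) (b j) ∧ Commute (b i) (b j))
    (C : Subgroup G) (hC : C ≤ Subgroup.center G)
    (hgen : Subgroup.closure (Set.range a ∪ Set.range b) ⊔ C = ⊤)
    (σ : G → G)
    (hanti : ∀ x y : G, σ (x * y) = σ y * σ x)
    (hσa : ∀ i, σ (a i) = a i * c) (hσb : ∀ i, σ (b i) = b i * c)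
    (hσC : ∀ d ∈ C, σ d = d ∨ σ d = d * c) :
    ∀ x : MonoidAlgebra K G,
      x * sigmaMap σ (1 : G →* Kˣ) x = sigmaMap σ (1 : G →* Kˣ) x * x := by
  have : CharP K 2 := ringChar.of_eq hchar
  have : (Subgroup.zpowers c).Normal :=
    Subgroup.normal_of_le_center (Subgroup.zpowers_le.mpr hcz)
  set π := QuotientGroup.mk' (Subgroup.zpowers c)
  have hπc : π c = 1 := (QuotientGroup.eq_one_iff c).mpr (Subgroup.mem_zpowers c)
  have hS : Subgroup.closure (Set.range a ∪ Set.range b ∪ C) = ⊤ := by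
    rwa [Subgroup.closure_union, Subgroup.closure_eq]
  have hquot : ∀ p q : G ⧸ Subgroup.zpowers c, Commute p q :=
    commute_of_surjective_of_closure_eq_top (QuotientGroup.mk'_surjective _) hS
      (commute_mk_of_mem_generators hcomm hfac hC)
  have hσS : ∀ s ∈ Set.range a ∪ Set.range b ∪ C, π (σ s) = π s := by
    rintro s ((⟨i, rfl⟩ | ⟨i, rfl⟩) | hs)
    · rw [hσa, map_mul, hπc, mul_one]
    · rw [hσb, map_mul, hπc, mul_one]
    · rcases hσC s hs with h | h <;> rw [h]
      rw [map_mul, hπc, mul_one]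
  have hσ : ∀ g, σ g = g ∨ σ g = g * c := fun g =>
    eq_or_eq_mul_of_mk_eq hc2 (map_antiMul_eq_of_eqOn_dense hquot π hanti hS hσS g).symm
  have hcommutator : ∀ g h : G, h * g = g * h ∨ h * g = g * h * c := fun g h =>
    eq_or_eq_mul_of_mk_eq hc2 <|
      (map_mul π g h).trans <| (hquot _ _).eq.trans (map_mul π h g).symm
  exact mul_sigmaMap_one_comm hcz hc2 hcommutator hσ

theorem stmt_19 {K G : Type*} [CommRing K] [Group G] (hchar : ringChar K = 2)
    (n : ℕ) (hn : 2 ≤ n) (a b : Fin n → G) (c : G)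
    (hc1 : c ≠ 1) (hc2 : c ^ 2 = 1) (hcz : c ∈ Subgroup.center G)
    (hcomm : ∀ i, (a i)⁻¹ * (b i)⁻¹ * a i * b i = c)
    (hfac : ∀ i j, i ≠ j →
      Commute (a i) (a j) ∧ Commute (a i) (b j) ∧ Commute (b i) (b j))
    (C : Subgroup G) (hC : C ≤ Subgroup.center G)
    (hgen : Subgroup.closure (Set.range a ∪ Set.range b) ⊔ C = ⊤)
    (σ : G → G)
    (hanti : ∀ x y : G, σ (x * y) = σ y * σ x)
    (hord : ∀ x : G, σ (σ x) = x)
    (hσa : ∀ i, σ (a i) = a i * c) (hσb : ∀ i, σ (b i) = b i * c)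
    (hσC : ∀ d ∈ C, σ d = d ∨ σ d = d * c) :
    ∀ x : MonoidAlgebra K G,
      x * sigmaMap σ (1 : G →* Kˣ) x = sigmaMap σ (1 : G →* Kˣ) x * x :=
  stmt_19_general hchar n a b c hc2 hcz hcomm hfac C hC hgen σ hanti hσa hσb hσC
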